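/- Let 1 → N → G → S → 1 be a short exact sequence of groups with S finite. If N satisfies ωACC, then G satisfies ωACC. -/

import Mathlib

/-- `RankLE H r`: the subgroup `H` is generated by at most `r` elements. -/
def RankLE {G : Type*} [Group G] (H : Subgroup G) (r : ℕ) : Prop :=
  ∃ S : Finset G, (S : Set G) ⊆ (H : Set G) ∧ Subgroup.closure (S : Set G) = H ∧ S.card ≤ r

/-- A group satisfies ωACC if every ascending chain of subgroups of uniformly
bounded rank is eventually constant. -/
def OmegaACC (G : Type*) [Group G] : Prop :=
  ∀ r : ℕ, ∀ H : ℕ → Subgroup G, Monotone H → (∀ n, RankLE (H n) r) →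
    ∃ N, ∀ n, N ≤ n → H n = H N

/-!
Intersecting with `ker p`, a subgroup of finite index `k ≤ |S|`, multiplies ranks by at most `k`
(Schreier), so for a chain `H n` of rank at most `r` the chain `H n ⊓ ker p`, pulled back to `N`,
has rank at most `k * r` and stabilizes. The images `p (H n)` stabilize because `S` has only
finitely many subgroups, and a subgroup `A ≤ B` with the same image under `p` and the same
intersection with `ker p` as `B` is equal to `B`.
-/

namespace RankLE

variable {G G' : Type*} [Group G] [Group G'] {H : Subgroup G} {r : ℕ}

theorem mono (h : RankLE H r) {s : ℕ} (hrs : r ≤ s) : RankLE H s :=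
  let ⟨T, hTH, hT, hTr⟩ := h
  ⟨T, hTH, hT, hTr.trans hrs⟩

theorem map (f : G →* G') (h : RankLE H r) : RankLE (H.map f) r := by
  classical
  obtain ⟨T, hTH, rfl, hTr⟩ := h
  refine ⟨T.image f, ?_, ?_, Finset.card_image_le.trans hTr⟩
  · rw [Finset.coe_image, Subgroup.coe_map]
    exact Set.image_mono Subgroup.subset_closure
  · rw [Finset.coe_image, MonoidHom.map_closure]

theorem comap_of_injective {f : G' →* G} (hf : Function.Injective f) (hH : H ≤ f.range)
    (h : RankLE H r) : RankLE (H.comap f) r := by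
  obtain ⟨T, hTH, hT, hTr⟩ := h
  have hT_range : (T : Set G) ⊆ Set.range f := fun x hx => hH (hTH hx)
  refine ⟨T.preimage f hf.injOn, fun x hx => hTH (Finset.mem_preimage.mp hx), ?_,
    (Finset.card_le_card_of_injOn f (fun x hx => Finset.mem_preimage.mp hx) hf.injOn).trans hTr⟩
  apply Subgroup.map_injective hf
  rw [Subgroup.map_comap_eq_self hH, MonoidHom.map_closure, Finset.coe_preimage,
    Set.image_preimage_eq_of_subset hT_range, hT]

theorem top_subgroup (h : RankLE H r) : RankLE (⊤ : Subgroup H) r := by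
  simpa using h.comap_of_injective H.subtype_injective (by simp)

theorem top_of_finiteIndex (h : RankLE (⊤ : Subgroup G) r) (K : Subgroup G) [K.FiniteIndex] :
    RankLE (⊤ : Subgroup K) (K.index * r) := by
  obtain ⟨T, -, hT, hTr⟩ := h
  obtain ⟨U, hUr, hU⟩ := K.exists_finset_card_le_mul hT
  exact ⟨U, Set.subset_univ _, hU, hUr.trans (Nat.mul_le_mul_left _ hTr)⟩

theorem inf_of_finiteIndex (h : RankLE H r) (K : Subgroup G) [K.FiniteIndex] :
    RankLE (H ⊓ K) (K.index * r) := by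
  have hK : (K.subgroupOf H).index ≤ K.index := by
    rw [← Subgroup.relIndex, ← K.relIndex_top_right]
    exact Subgroup.relIndex_le_of_le_right le_top
      (by rw [Subgroup.relIndex_top_right]; exact Subgroup.FiniteIndex.index_ne_zero)
  have := ((h.top_subgroup.top_of_finiteIndex (K.subgroupOf H)).map
    (K.subgroupOf H).subtype).map H.subtype
  rw [← MonoidHom.range_eq_map, Subgroup.range_subtype, Subgroup.subgroupOf_map_subtype,
    inf_comm] at this
  exact this.mono (Nat.mul_le_mul_right _ hK)

end RankLE

theorem Subgroup.eq_of_le_of_inf_ker_le_of_map_le {G G' : Type*} [Group G] [Group G']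
    {f : G →* G'} {A B : Subgroup G} (hAB : A ≤ B) (hker : B ⊓ f.ker ≤ A)
    (hmap : B.map f ≤ A.map f) : A = B := by
  refine le_antisymm hAB fun b hb => ?_
  obtain ⟨a, ha, hab⟩ := hmap (Subgroup.mem_map_of_mem f hb)
  have hker_mem : a⁻¹ * b ∈ B ⊓ f.ker :=
    Subgroup.mem_inf.mpr ⟨mul_mem (inv_mem (hAB ha)) hb, by simp [hab]⟩
  simpa using mul_mem ha (hker hker_mem)

theorem omegaACC_of_finite_quotient_general {N G S : Type*} [Group N] [Group G] [Group S]
    [Finite S] (i : N →* G) (p : G →* S) (hi : Function.Injective i)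
    (hex : i.range = p.ker) (hN : OmegaACC N) :
    OmegaACC G := by
  intro r H hH hrank
  have hker_range : ∀ n, H n ⊓ p.ker ≤ i.range := fun n => hex.ge.trans' inf_le_right
  obtain ⟨n₁, hn₁⟩ := hN (p.ker.index * r) (fun n => (H n ⊓ p.ker).comap i)
    (fun m n hmn => Subgroup.comap_mono (inf_le_inf_right _ (hH hmn)))
    (fun n => ((hrank n).inf_of_finiteIndex p.ker).comap_of_injective hi (hker_range n))
  obtain ⟨n₂, hn₂⟩ := WellFoundedGT.monotone_chain_condition
    (⟨fun n => (H n).map p, fun m n hmn => Subgroup.map_mono (hH hmn)⟩ : ℕ →o Subgroup S)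
  refine ⟨max n₁ n₂, fun n hn =>
    (Subgroup.eq_of_le_of_inf_ker_le_of_map_le (f := p) (hH hn) ?_ ?_).symm⟩
  · rw [← Subgroup.comap_le_comap_of_le_range (hker_range n), hn₁ n (le_of_max_le_left hn),
      ← hn₁ _ (le_max_left _ _)]
    exact Subgroup.comap_mono inf_le_left
  · exact ((hn₂ n (le_of_max_le_right hn)).symm.trans (hn₂ _ (le_max_right _ _))).le

/-- Let `1 → N → G → S → 1` be a short exact sequence of groups with `S` finite.
If `N` satisfies ωACC, then `G` satisfies ωACC. -/
theorem omegaACC_of_finite_quotient {N G S : Type*} [Group N] [Group G] [Group S]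
    [Finite S] (i : N →* G) (p : G →* S) (hi : Function.Injective i)
    (hp : Function.Surjective p) (hex : i.range = p.ker) (hN : OmegaACC N) :
    OmegaACC G :=
  omegaACC_of_finite_quotient_general i p hi hex hN
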